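/- Let x* ∈ ℝ^N be nonzero, let w ∈ ℝ^N satisfy wᵀx* = 0 and ‖w‖₂ = 1, and let x ∈ ℝ^N satisfy min over γ ∈ {1,−1} of ‖x − γ(1/√3)‖x*‖₂ w‖₂ ≤ (1/5)‖x*‖₂. Then, with v = x*/‖x*‖₂, vᵀ∇²g(x)v = 12⟨x,v⟩² − 4‖x*‖₂² + 6‖x‖₂² − 2‖x*‖₂² ≤ −0.78‖x*‖₂²; in particular λ_min(∇²g(x)) ≤ −0.78‖x*‖₂². In particular the points ±(1/√3)‖x*‖₂ w are strict saddle points of g with λ_min(∇²g(±(1/√3)‖x*‖₂ w)) = −4‖x*‖₂². -/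

import Mathlib

open scoped RealInnerProductSpace

/-- The gradient of the phase-retrieval population risk
`g(x) = ‖xxᵀ − x*x*ᵀ‖_F² + (1/2)(‖x‖² − ‖x*‖²)²`, namely
`∇g(x) = 6‖x‖²x − 2‖x*‖²x − 4(x*ᵀx)x*`. -/
noncomputable def gradPR {N : ℕ} (xs x : EuclideanSpace ℝ (Fin N)) :
    EuclideanSpace ℝ (Fin N) :=
  (6 * ‖x‖ ^ 2 - 2 * ‖xs‖ ^ 2) • x - (4 * ⟪xs, x⟫) • xs

/-- The smallest eigenvalue of the Hessian
`∇²g(x) = 12xxᵀ − 4x*x*ᵀ + (6‖x‖² − 2‖x*‖²)I` of the phase-retrieval population risk,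
given as the infimum of the Rayleigh quotient over the unit sphere. -/
noncomputable def lamMinHess {N : ℕ} (xs x : EuclideanSpace ℝ (Fin N)) : ℝ :=
  sInf {t : ℝ | ∃ v : EuclideanSpace ℝ (Fin N), ‖v‖ = 1 ∧
    t = 12 * ⟪x, v⟫ ^ 2 - 4 * ⟪xs, v⟫ ^ 2 + 6 * ‖x‖ ^ 2 - 2 * ‖xs‖ ^ 2}

/-!
Along `v = x*/‖x*‖` the Rayleigh quotient of `∇²g(x)` is `12⟨x,v⟩² + 6‖x‖² − 6‖x*‖²`.
Near `±‖x*‖ w/√3` the component `⟨x,v⟩` is at most `‖x*‖/5` and `‖x‖ ≤ (1/5 + 1/√3)‖x*‖`,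
so this is below `−1.6‖x*‖²`. Conversely, dropping the `12⟨x,v⟩²` term and bounding
`⟨x*,v⟩² ≤ ‖x*‖²` shows that every Rayleigh quotient is at least `6‖x‖² − 6‖x*‖²`; at the
saddle points `⟨x,x*⟩ = 0` and `3‖x‖² = ‖x*‖²`, so both bounds equal `−4‖x*‖²`.
-/

section InnerProductSpace

variable {E : Type*} [NormedAddCommGroup E] [InnerProductSpace ℝ E]

lemma sq_real_inner_le_sq_norm_of_norm_eq_one (a : E) {v : E} (hv : ‖v‖ = 1) :
    ⟪a, v⟫ ^ 2 ≤ ‖a‖ ^ 2 := by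
  calc ⟪a, v⟫ ^ 2 = |⟪a, v⟫| ^ 2 := (sq_abs _).symm
    _ ≤ (‖a‖ * ‖v‖) ^ 2 := by gcongr; exact abs_real_inner_le_norm a v
    _ = ‖a‖ ^ 2 := by rw [hv, mul_one]

lemma hessian_rayleigh_normalize_le {xs : E} (hxs : xs ≠ 0) (x u : E) (hu : ⟪u, xs⟫ = 0)
    (hun : ‖u‖ = (Real.sqrt 3)⁻¹ * ‖xs‖) (hx : ‖x - u‖ ≤ (1 / 5) * ‖xs‖) :
    12 * ⟪x, ‖xs‖⁻¹ • xs⟫ ^ 2 - 4 * ‖xs‖ ^ 2 + 6 * ‖x‖ ^ 2 - 2 * ‖xs‖ ^ 2 ≤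
      -0.78 * ‖xs‖ ^ 2 := by
  set v := ‖xs‖⁻¹ • xs
  have hv : ‖v‖ = 1 := norm_smul_inv_norm (𝕜 := ℝ) hxs
  have huv : ⟪u, v⟫ = 0 := by rw [real_inner_smul_right, hu, mul_zero]
  have hxv : ⟪x, v⟫ ^ 2 ≤ ((1 / 5) * ‖xs‖) ^ 2 := by
    have : ⟪x, v⟫ = ⟪x - u, v⟫ := by rw [inner_sub_left, huv, sub_zero]
    rw [this]
    exact (sq_real_inner_le_sq_norm_of_norm_eq_one _ hv).trans (by gcongr)
  have hu_le : ‖u‖ ≤ 0.6 * ‖xs‖ := by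
    have h3 : (5 / 3 : ℝ) ≤ Real.sqrt 3 := Real.le_sqrt_of_sq_le (by norm_num)
    rw [hun]
    gcongr
    rw [inv_le_comm₀ (by positivity) (by norm_num)]
    linarith
  have hx_le : ‖x‖ ≤ 0.8 * ‖xs‖ :=
    calc ‖x‖ ≤ ‖x - u‖ + ‖u‖ := norm_le_norm_sub_add x u
      _ ≤ 0.8 * ‖xs‖ := by linarith
  nlinarith [norm_nonneg x]

end InnerProductSpace

section EuclideanSpace

variable {N : ℕ} {xs : EuclideanSpace ℝ (Fin N)}

lemma le_lamMinHess (hxs : xs ≠ 0) (x : EuclideanSpace ℝ (Fin N)) :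
    6 * ‖x‖ ^ 2 - 6 * ‖xs‖ ^ 2 ≤ lamMinHess xs x := by
  refine le_csInf ⟨_, ‖xs‖⁻¹ • xs, norm_smul_inv_norm (𝕜 := ℝ) hxs, rfl⟩ ?_
  rintro t ⟨v, hv, rfl⟩
  nlinarith [sq_nonneg ⟪x, v⟫, sq_real_inner_le_sq_norm_of_norm_eq_one xs hv]

lemma lamMinHess_le_of_norm_eq_one (x : EuclideanSpace ℝ (Fin N)) {v : EuclideanSpace ℝ (Fin N)}
    (hv : ‖v‖ = 1) :
    lamMinHess xs x ≤ 12 * ⟪x, v⟫ ^ 2 - 4 * ⟪xs, v⟫ ^ 2 + 6 * ‖x‖ ^ 2 - 2 * ‖xs‖ ^ 2 := by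
  refine csInf_le ⟨6 * ‖x‖ ^ 2 - 6 * ‖xs‖ ^ 2, ?_⟩ ⟨v, hv, rfl⟩
  rintro t ⟨v, hv, rfl⟩
  nlinarith [sq_nonneg ⟪x, v⟫, sq_real_inner_le_sq_norm_of_norm_eq_one xs hv]

lemma lamMinHess_le_normalize (hxs : xs ≠ 0) (x : EuclideanSpace ℝ (Fin N)) :
    lamMinHess xs x ≤
      12 * ⟪x, ‖xs‖⁻¹ • xs⟫ ^ 2 - 4 * ‖xs‖ ^ 2 + 6 * ‖x‖ ^ 2 - 2 * ‖xs‖ ^ 2 := by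
  have hxs_v : ⟪xs, ‖xs‖⁻¹ • xs⟫ = ‖xs‖ := by
    rw [real_inner_smul_right, real_inner_self_eq_norm_sq]
    field_simp [norm_ne_zero_iff.mpr hxs]
  simpa [hxs_v] using lamMinHess_le_of_norm_eq_one (xs := xs) x (norm_smul_inv_norm (𝕜 := ℝ) hxs)

lemma lamMinHess_eq_of_inner_eq_zero (hxs : xs ≠ 0) {y : EuclideanSpace ℝ (Fin N)}
    (hy : ⟪y, xs⟫ = 0) (hny : 3 * ‖y‖ ^ 2 = ‖xs‖ ^ 2) :
    lamMinHess xs y = -4 * ‖xs‖ ^ 2 := by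
  have hyv : ⟪y, ‖xs‖⁻¹ • xs⟫ = 0 := by rw [real_inner_smul_right, hy, mul_zero]
  have hle := lamMinHess_le_normalize hxs y
  have hge := le_lamMinHess hxs y
  rw [hyv] at hle
  linarith

lemma gradPR_eq_zero_of_inner_eq_zero {y : EuclideanSpace ℝ (Fin N)}
    (hy : ⟪xs, y⟫ = 0) (hny : 3 * ‖y‖ ^ 2 = ‖xs‖ ^ 2) :
    gradPR xs y = 0 := by
  have hcoeff : 6 * ‖y‖ ^ 2 - 2 * ‖xs‖ ^ 2 = 0 := by linarith
  rw [gradPR, hcoeff, hy]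
  simp

end EuclideanSpace

theorem stmt_17 {N : ℕ} (xs x w : EuclideanSpace ℝ (Fin N)) (hxs : xs ≠ 0)
    (hw : ‖w‖ = 1) (hworth : ⟪w, xs⟫ = 0)
    (c : ℝ) (hc : c = (Real.sqrt 3)⁻¹ * ‖xs‖)
    (hx : min ‖x - c • w‖ ‖x + c • w‖ ≤ (1 / 5) * ‖xs‖) :
    12 * ⟪x, ‖xs‖⁻¹ • xs⟫ ^ 2 - 4 * ‖xs‖ ^ 2 + 6 * ‖x‖ ^ 2 - 2 * ‖xs‖ ^ 2 ≤
      -0.78 * ‖xs‖ ^ 2 ∧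
    lamMinHess xs x ≤ -0.78 * ‖xs‖ ^ 2 ∧
    gradPR xs (c • w) = 0 ∧ gradPR xs (-(c • w)) = 0 ∧
    lamMinHess xs (c • w) = -4 * ‖xs‖ ^ 2 ∧
    lamMinHess xs (-(c • w)) = -4 * ‖xs‖ ^ 2 := by
  have hnorm : ‖c • w‖ = (Real.sqrt 3)⁻¹ * ‖xs‖ := by
    rw [norm_smul, hw, mul_one, hc, Real.norm_of_nonneg (by positivity)]
  have hnorm_sq : 3 * ‖c • w‖ ^ 2 = ‖xs‖ ^ 2 := by
    rw [hnorm, mul_pow, inv_pow, Real.sq_sqrt (by norm_num : (0 : ℝ) ≤ 3)]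
    ring
  have horth : ⟪c • w, xs⟫ = 0 := by rw [real_inner_smul_left, hworth, mul_zero]
  have horth' : ⟪xs, c • w⟫ = 0 := by rw [real_inner_comm, horth]
  have hcurv : 12 * ⟪x, ‖xs‖⁻¹ • xs⟫ ^ 2 - 4 * ‖xs‖ ^ 2 + 6 * ‖x‖ ^ 2 - 2 * ‖xs‖ ^ 2 ≤
      -0.78 * ‖xs‖ ^ 2 := by
    rcases min_le_iff.mp hx with hnear | hnear
    · exact hessian_rayleigh_normalize_le hxs x (c • w) horth hnorm hnear
    · refine hessian_rayleigh_normalize_le hxs x (-(c • w)) ?_ (by rw [norm_neg, hnorm]) ?_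
      · rw [inner_neg_left, horth, neg_zero]
      · rwa [sub_neg_eq_add]
  refine ⟨hcurv, (lamMinHess_le_normalize hxs x).trans hcurv,
    gradPR_eq_zero_of_inner_eq_zero horth' hnorm_sq, ?_,
    lamMinHess_eq_of_inner_eq_zero hxs horth hnorm_sq, ?_⟩
  · exact gradPR_eq_zero_of_inner_eq_zero (by rw [inner_neg_right, horth', neg_zero])
      (by rwa [norm_neg])
  · exact lamMinHess_eq_of_inner_eq_zero hxs (by rw [inner_neg_left, horth, neg_zero])
      (by rwa [norm_neg])
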